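/- A 2×2 complex matrix-valued 2-form dZ ∧ A dZᵗ (with A ∈ M₂(ℂ) constant) has all matrix entries self-dual if and only if A is symmetric (A = Aᵗ). -/
import Mathlib


open Matrix

/-- Coordinate indices on ℂ⁴ ≅ M₂(ℂ): (i,j) labels z_{ij}. -/
abbrev Idx : Type := Fin 2 × Fin 2

/-- A 1-form is given by its coefficients in the basis (dz_p). The coordinate 1-form
    dz_{ik}. -/
def dz (i k : Fin 2) : Idx → ℂ := fun p => if p = (i, k) then 1 else 0

/-- The matrix of 1-forms dZ : (dZ)_{ik} = dz_{ik}. -/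
def dZ : Fin 2 → Fin 2 → Idx → ℂ := fun i k => dz i k

/-- The transposed matrix of 1-forms dZᵗ : (dZᵗ)_{lj} = dz_{jl}. -/
def dZt : Fin 2 → Fin 2 → Idx → ℂ := fun l j => dz j l

/-- Product of a constant matrix with a matrix of 1-forms. -/
noncomputable def matMulForm (A : Matrix (Fin 2) (Fin 2) ℂ) (C : Fin 2 → Fin 2 → Idx → ℂ) :
    Fin 2 → Fin 2 → Idx → ℂ :=
  fun k j p => ∑ l : Fin 2, A k l * C l j p

/-- Wedge of two matrices of 1-forms: the (i,j) entry is a 2-form, recorded by its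
    antisymmetric coefficients on dz_p ∧ dz_q. -/
noncomputable def wedge (B C : Fin 2 → Fin 2 → Idx → ℂ) : Fin 2 → Fin 2 → Idx → Idx → ℂ :=
  fun i j p q => ∑ k : Fin 2, (B i k p * C k j q - B i k q * C k j p)

/-- A 2-form (given by antisymmetric coefficients) is self-dual iff its components on
    dz11∧dz12 and dz21∧dz22 vanish and its dz11∧dz22 and dz12∧dz21 components agree. -/
def IsSD (ω : Idx → Idx → ℂ) : Prop :=
  ω ((0 : Fin 2), (0 : Fin 2)) ((0 : Fin 2), (1 : Fin 2)) = 0 ∧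
  ω ((1 : Fin 2), (0 : Fin 2)) ((1 : Fin 2), (1 : Fin 2)) = 0 ∧
  ω ((0 : Fin 2), (0 : Fin 2)) ((1 : Fin 2), (1 : Fin 2)) =
    ω ((0 : Fin 2), (1 : Fin 2)) ((1 : Fin 2), (0 : Fin 2))

/-- dZ ∧ A dZᵗ is self-dual (entrywise) iff A is symmetric. -/
theorem wedge_dZ_A_dZt_selfDual_iff_symm (A : Matrix (Fin 2) (Fin 2) ℂ) :
    (∀ i j : Fin 2, IsSD (wedge dZ (matMulForm A dZt) i j)) ↔ Aᵀ = A := by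
  constructor
  · intro h
    have h01 := h 0 1
    simp [IsSD, wedge, matMulForm, dZ, dZt, dz, Fin.sum_univ_two, Prod.ext_iff] at h01
    ext i j
    fin_cases i <;> fin_cases j <;> simp [transpose, h01]
  · intro h i j
    have h01 : A 0 1 = A 1 0 := by
      have := congrFun (congrFun h 1) 0
      simpa [transpose] using this
    fin_cases i <;> fin_cases j <;>
      simp [IsSD, wedge, matMulForm, dZ, dZt, dz, Fin.sum_univ_two, Prod.ext_iff, h01]
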